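/- arXiv:1610.07968 — 5 statements merged into one kernel-verified Lean document; each statement's English description precedes it below -/
import Mathlib

section
/- The quotient ring ℤ[c, c̄₁, …, c̄_{n-1}]/(relations from (1+c)(1+c̄₁+⋯+c̄_{n-1}) = 1, graded with deg c = 2, deg c̄ᵢ = 2i) is isomorphic as a ring to ℤ[c]/(cⁿ). Concretely: in ℤ[c][c̄₁,…,c̄_{n-1}], the ideal generated by the homogeneous components of degrees 1 through n of the product (1+c)(1+c̄₁+⋯+c̄_{n-1}) − 1 yields a quotient isomorphic to ℤ[c]/(cⁿ). -/
open MvPolynomial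

/-- The `j`-th complementary Chern generator of `ℂP^{n-1}`:
`gCP n 0 = 1` (the class `c̄₀`), `gCP n j = c̄ⱼ = X j` for `1 ≤ j ≤ n-1`,
and `0` for `j ≥ n`.  The variable `X ⟨0,_⟩` plays the role of `c`. -/
noncomputable def gCP (n : ℕ) (j : ℕ) : MvPolynomial (Fin n) ℤ :=
  if j = 0 then 1 else if h : j < n then X ⟨j, h⟩ else 0

/-! Modulo the relations `c̄ⱼ + c·c̄ⱼ₋₁`, induction on `j` gives `c̄ⱼ = (-c)ʲ`, and the last
relation `c̄ₙ = 0` then says `cⁿ = 0`; so `X ↦ c` defines a map `ℤ[X]/(Xⁿ) → ℤ[c, c̄]/I`.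
Conversely `c ↦ X`, `c̄ᵢ ↦ (-X)ⁱ` kills every relation, since `(-X)ʲ + X·(-X)ʲ⁻¹ = 0` (for
`j = n` the term `c̄ₙ = 0` matches `(-X)ⁿ = 0`). Both composites fix the
generators. -/

theorem eq_neg_pow_of_add_mul_eq_zero {A : Type*} [CommRing A] {c : A} {b : ℕ → A}
    (h0 : b 0 = 1) {k : ℕ} (hrec : ∀ j, 1 ≤ j → j ≤ k → b j + c * b (j - 1) = 0) :
    ∀ j ≤ k, b j = (-c) ^ j := by
  intro j
  induction j with
  | zero => simp [h0]
  | succ j ih =>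
    intro hj
    have hb := hrec (j + 1) (by omega) hj
    rw [Nat.add_sub_cancel, ih (by omega)] at hb
    rw [pow_succ, eq_neg_of_add_eq_zero_left hb]
    ring

section gCP

variable {n : ℕ}

@[simp]
theorem gCP_zero : gCP n 0 = 1 := by simp [gCP]

theorem gCP_of_ne_zero_of_lt {j : ℕ} (hj0 : j ≠ 0) (hjn : j < n) : gCP n j = X ⟨j, hjn⟩ := by
  simp [gCP, hj0, hjn]

theorem gCP_of_ne_zero_of_le {j : ℕ} (hj0 : j ≠ 0) (hnj : n ≤ j) : gCP n j = 0 := by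
  simp [gCP, hj0, show ¬j < n by omega]

end gCP

section Chern

variable (n : ℕ) (hn : 1 ≤ n)

noncomputable def chernRelationIdeal : Ideal (MvPolynomial (Fin n) ℤ) :=
  Ideal.span {p | ∃ j, 1 ≤ j ∧ j ≤ n ∧ p = gCP n j + X ⟨0, hn⟩ * gCP n (j - 1)}

theorem mk_gCP_eq_neg_pow {j : ℕ} (hj : j ≤ n) :
    Ideal.Quotient.mk (chernRelationIdeal n hn) (gCP n j) =
      (-(Ideal.Quotient.mk (chernRelationIdeal n hn) (X ⟨0, hn⟩))) ^ j := by
  refine eq_neg_pow_of_add_mul_eq_zero (b := fun j ↦ Ideal.Quotient.mk _ (gCP n j))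
    (by simp) (fun j hj1 hjn ↦ ?_) j hj
  rw [← map_mul, ← map_add, Ideal.Quotient.eq_zero_iff_mem]
  exact Ideal.subset_span ⟨j, hj1, hjn, rfl⟩

theorem mk_X_zero_pow_eq_zero :
    Ideal.Quotient.mk (chernRelationIdeal n hn) (X ⟨0, hn⟩) ^ n = 0 := by
  have hcn := mk_gCP_eq_neg_pow n hn le_rfl
  rwa [gCP_of_ne_zero_of_le (by omega) le_rfl, map_zero, eq_comm,
    neg_pow (R := MvPolynomial (Fin n) ℤ ⧸ chernRelationIdeal n hn),
    neg_one_pow_mul_eq_zero_iff] at hcn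

variable {n} {A : Type*} [CommRing A]

-- The variable `0` is `c`; the others are `c̄ᵢ`.
def chernSubst (a : A) (i : Fin n) : A := if (i : ℕ) = 0 then a else (-a) ^ (i : ℕ)

theorem chernSubst_zero (a : A) : chernSubst a ⟨0, hn⟩ = a := if_pos rfl

theorem aeval_chernSubst_gCP {a : A} (ha : a ^ n = 0) (j : ℕ) :
    aeval (chernSubst a) (gCP n j) = (-a) ^ j := by
  rcases Nat.eq_zero_or_pos j with rfl | hj0
  · simp
  rcases lt_or_ge j n with hjn | hnj
  · simp [gCP_of_ne_zero_of_lt hj0.ne' hjn, chernSubst, hj0.ne']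
  · rw [gCP_of_ne_zero_of_le hj0.ne' hnj, map_zero, ← Nat.sub_add_cancel hnj, pow_add,
      neg_pow a n, ha, mul_zero, mul_zero]

theorem map_chernSubst {B F : Type*} [CommRing B] [FunLike F A B] [RingHomClass F A B] (f : F)
    (a : A) (i : Fin n) : f (chernSubst a i) = chernSubst (f a) i := by
  unfold chernSubst
  split_ifs <;> simp

theorem mk_X_eq_chernSubst (i : Fin n) :
    Ideal.Quotient.mk (chernRelationIdeal n hn) (X i) =
      chernSubst (Ideal.Quotient.mk (chernRelationIdeal n hn) (X ⟨0, hn⟩)) i := by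
  by_cases hi : (i : ℕ) = 0
  · rw [show i = ⟨0, hn⟩ from Fin.ext hi, chernSubst_zero]
  · rw [chernSubst, if_neg hi, ← mk_gCP_eq_neg_pow n hn i.isLt.le,
      gCP_of_ne_zero_of_lt hi i.isLt]

noncomputable def liftChernQuotient {a : A} (ha : a ^ n = 0) :
    MvPolynomial (Fin n) ℤ ⧸ chernRelationIdeal n hn →+* A :=
  Ideal.Quotient.lift _ (aeval (chernSubst a)).toRingHom fun p hp ↦ by
    refine (Ideal.span_le (I := RingHom.ker (aeval (chernSubst a)).toRingHom)).2 ?_ hp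
    rintro _ ⟨j, hj1, -, rfl⟩
    obtain ⟨k, rfl⟩ := Nat.exists_eq_add_of_le' hj1
    simp only [SetLike.mem_coe, RingHom.mem_ker, AlgHom.toRingHom_eq_coe, RingHom.coe_coe,
      map_add, map_mul, aeval_X, aeval_chernSubst_gCP ha, Nat.add_sub_cancel]
    rw [chernSubst_zero]
    ring

@[simp]
theorem liftChernQuotient_mk {a : A} (ha : a ^ n = 0) (p : MvPolynomial (Fin n) ℤ) :
    liftChernQuotient hn ha (Ideal.Quotient.mk _ p) = aeval (chernSubst a) p := rfl

end Chern

theorem AdjoinRoot.root_X_pow_pow (R : Type*) [CommRing R] (n : ℕ) :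
    root (Polynomial.X ^ n : Polynomial R) ^ n = 0 := by
  rw [← mk_X, ← map_pow, mk_self]

noncomputable def chernQuotientEquiv (n : ℕ) (hn : 1 ≤ n) :
    MvPolynomial (Fin n) ℤ ⧸ chernRelationIdeal n hn ≃+*
      AdjoinRoot (Polynomial.X ^ n : Polynomial ℤ) := by
  let ψ := AdjoinRoot.lift (f := Polynomial.X ^ n) (Int.castRingHom _)
    (Ideal.Quotient.mk (chernRelationIdeal n hn) (X ⟨0, hn⟩))
    (by simpa using mk_X_zero_pow_eq_zero n hn)
  have hψ : ψ (AdjoinRoot.root _) = Ideal.Quotient.mk _ (X ⟨0, hn⟩) := AdjoinRoot.lift_root _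
  refine RingEquiv.ofRingHom (liftChernQuotient hn (AdjoinRoot.root_X_pow_pow ℤ n)) ψ ?_ ?_
  · refine AdjoinRoot.ringHom_ext (RingHom.ext_int _ _) ?_
    rw [RingHom.comp_apply, hψ, liftChernQuotient_mk, aeval_X, chernSubst_zero, RingHom.id_apply]
  · refine Ideal.Quotient.ringHom_ext (MvPolynomial.ringHom_ext' (RingHom.ext_int _ _) fun i ↦ ?_)
    rw [RingHom.id_comp, RingHom.comp_apply, RingHom.comp_apply, liftChernQuotient_mk, aeval_X,
      map_chernSubst, hψ, mk_X_eq_chernSubst hn i]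

/-- The quotient of `ℤ[c, c̄₁, …, c̄_{n-1}]` by the ideal generated by the
homogeneous components of degrees `1, …, n` of `(1+c)(1+c̄₁+⋯+c̄_{n-1}) - 1`,
namely the elements `c̄ⱼ + c·c̄_{j-1}` for `1 ≤ j ≤ n`, is isomorphic as a
ring to `ℤ[c]/(cⁿ)`. -/
theorem stmt0 (n : ℕ) (hn : 1 ≤ n) :
    Nonempty (
      (MvPolynomial (Fin n) ℤ ⧸ Ideal.span
        { p : MvPolynomial (Fin n) ℤ | ∃ j, 1 ≤ j ∧ j ≤ n ∧
            p = gCP n j + X (⟨0, hn⟩ : Fin n) * gCP n (j - 1) })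
      ≃+*
      (Polynomial ℤ ⧸ Ideal.span {(Polynomial.X : Polynomial ℤ) ^ n})) :=
  ⟨chernQuotientEquiv n hn⟩
end

section
/- In the graded ℚ-algebra A = ℚ[e, ē]/(e^{2n−1}, e·ē, ē² − (−1)^{n−1}e^{2n−2}) with deg e = 2, deg ē = 2n−2 (n ≥ 2), the elements 1, e, e², …, e^{2n−2}, ē form a ℚ-vector space basis; in particular dim_ℚ A = 2n. -/
/-!
The coordinate functionals of the candidate basis (with `ē²` read as `(-1)^{n-1} e^{2n-2}`)
cut out a subspace of `ℚ[e, ē]` that is stable under multiplication by `e` and `ē`, hence an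
ideal; it contains the three relations, so the functionals descend to `A` and are dual to the
candidate basis, which is therefore linearly independent. Conversely, the span of the candidate
basis in `A` contains `1` and is stable under multiplication by `e` and `ē` thanks to the
relations, so it is all of `A`.
-/

open MvPolynomial

/-- The relations ideal of `H^*(G̃₂(ℝ^{2n}); ℚ) = ℚ[e,ē]/(e^{2n-1}, e·ē, ē² - (-1)^{n-1} e^{2n-2})`,
with `e = X 0` and `ē = X 1`. -/
noncomputable def orGrassIdeal (n : ℕ) : Ideal (MvPolynomial (Fin 2) ℚ) :=
  Ideal.span
    ({X 0 ^ (2 * n - 1), X 0 * X 1,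
      X 1 ^ 2 - (-1 : MvPolynomial (Fin 2) ℚ) ^ (n - 1) * X 0 ^ (2 * n - 2)} :
      Set (MvPolynomial (Fin 2) ℚ))

namespace MvPolynomial

variable {R σ : Type*} [CommSemiring R]

theorem mul_mem_of_forall_X_mul_mem {S : Submodule R (MvPolynomial σ R)}
    (hX : ∀ i, ∀ p ∈ S, X i * p ∈ S) (q : MvPolynomial σ R) {p : MvPolynomial σ R}
    (hp : p ∈ S) : q * p ∈ S := by
  induction q using MvPolynomial.induction_on generalizing p with
  | C a => simpa only [← smul_eq_C_mul] using S.smul_mem a hp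
  | add q r hq hr => simpa only [add_mul] using S.add_mem (hq hp) (hr hp)
  | mul_X q i hq => simpa only [mul_assoc] using hq (hX i p hp)

theorem restrictScalars_span_le_of_forall_X_mul_mem {S : Submodule R (MvPolynomial σ R)}
    (hX : ∀ i, ∀ p ∈ S, X i * p ∈ S) {s : Set (MvPolynomial σ R)} (hs : s ⊆ S) :
    (Ideal.span s).restrictScalars R ≤ S := fun _ hp =>
  Submodule.span_induction (fun _ hx => hs hx) S.zero_mem (fun _ _ _ _ => S.add_mem)
    (fun q _ _ hx => mul_mem_of_forall_X_mul_mem hX q hx) hp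

theorem span_eq_top_of_forall_X_mul_mem {A : Type*} [Semiring A] [Algebra R A]
    {f : MvPolynomial σ R →ₐ[R] A} (hf : Function.Surjective f) {s : Set A}
    (h1 : 1 ∈ Submodule.span R s) (hX : ∀ i, ∀ a ∈ s, f (X i) * a ∈ Submodule.span R s) :
    Submodule.span R s = ⊤ := by
  set S := Submodule.span R s
  have hXS (i : σ) : S ≤ S.comap (LinearMap.mulLeft R (f (X i))) :=
    Submodule.span_le.mpr (hX i)
  have hX' : ∀ i, ∀ p ∈ S.comap f.toLinearMap, X i * p ∈ S.comap f.toLinearMap :=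
    fun i p hp => by simpa using hXS i hp
  refine Submodule.eq_top_iff'.mpr fun a => ?_
  obtain ⟨q, rfl⟩ := hf a
  simpa using mul_mem_of_forall_X_mul_mem hX' q (p := 1) (by simpa using h1)

theorem coeff_single_succ_X_mul (i : σ) (k : ℕ) (p : MvPolynomial σ R) :
    coeff (Finsupp.single i (k + 1)) (X i * p) = coeff (Finsupp.single i k) p := by
  rw [Finsupp.single_add, add_comm, coeff_X_mul]

theorem coeff_X_mul_of_apply_eq_zero {m : σ →₀ ℕ} {i : σ} (hm : m i = 0) (p : MvPolynomial σ R) :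
    coeff m (X i * p) = 0 := by
  classical
  rw [coeff_X_mul', if_neg (by simpa using hm)]

end MvPolynomial

namespace OrientedGrassmannian

/-- Coordinates with respect to `1, e, …, e^{2n-2}, ē`, where a monomial `ē²` counts as
`(-1)^{n-1} e^{2n-2}`. -/
noncomputable def coord (n : ℕ) (j : Fin (2 * n)) : MvPolynomial (Fin 2) ℚ →ₗ[ℚ] ℚ :=
  if (j : ℕ) < 2 * n - 2 then lcoeff ℚ (Finsupp.single 0 j)
  else if (j : ℕ) = 2 * n - 2 then
    lcoeff ℚ (Finsupp.single 0 (2 * n - 2)) + (-1 : ℚ) ^ (n - 1) • lcoeff ℚ (Finsupp.single 1 2)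
  else lcoeff ℚ (Finsupp.single 1 1)

noncomputable def basisRep (n : ℕ) (i : Fin (2 * n)) : MvPolynomial (Fin 2) ℚ :=
  if (i : ℕ) < 2 * n - 1 then X 0 ^ (i : ℕ) else X 1

theorem coord_basisRep (n : ℕ) (i j : Fin (2 * n)) :
    coord n j (basisRep n i) = if i = j then 1 else 0 := by
  have := j.isLt
  simp only [coord, basisRep]
  split_ifs <;> simp only [LinearMap.add_apply, LinearMap.smul_apply, lcoeff_apply, coeff_X_pow,
    coeff_X, Finsupp.single_eq_single_iff] <;> split_ifs <;> simp_all [Fin.ext_iff] <;> omega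

noncomputable def coordKer (n : ℕ) : Submodule ℚ (MvPolynomial (Fin 2) ℚ) :=
  ⨅ j, LinearMap.ker (coord n j)

theorem mem_coordKer_iff {n : ℕ} (hn : 1 ≤ n) {p : MvPolynomial (Fin 2) ℚ} :
    p ∈ coordKer n ↔ (∀ k < 2 * n - 2, coeff (Finsupp.single 0 k) p = 0) ∧
      coeff (Finsupp.single 0 (2 * n - 2)) p + (-1) ^ (n - 1) * coeff (Finsupp.single 1 2) p = 0 ∧
      coeff (Finsupp.single 1 1) p = 0 := by
  simp only [coordKer, Submodule.mem_iInf, LinearMap.mem_ker]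
  constructor
  · intro hp
    refine ⟨fun k hk => ?_, ?_, ?_⟩
    · simpa [coord, hk] using hp ⟨k, by omega⟩
    · simpa [coord] using hp ⟨2 * n - 2, by omega⟩
    · simpa [coord, show ¬ 2 * n - 1 < 2 * n - 2 by omega, show 2 * n - 1 ≠ 2 * n - 2 by omega]
        using hp ⟨2 * n - 1, by omega⟩
  · rintro ⟨hlow, htop, hbar⟩ j
    simp only [coord]
    split_ifs with hj hj'
    · exact hlow j hj
    · simpa [hj'] using htop
    · exact hbar

theorem X_mul_mem_coordKer {n : ℕ} (hn : 2 ≤ n) (i : Fin 2) {p : MvPolynomial (Fin 2) ℚ}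
    (hp : p ∈ coordKer n) : X i * p ∈ coordKer n := by
  rw [mem_coordKer_iff (by omega)] at hp ⊢
  obtain ⟨hlow, htop, hbar⟩ := hp
  match i with
  | 0 =>
    refine ⟨fun k hk => ?_, ?_, coeff_X_mul_of_apply_eq_zero (by simp) p⟩
    · cases k with
      | zero => exact coeff_X_mul_of_apply_eq_zero (by simp) p
      | succ k => rw [coeff_single_succ_X_mul]; exact hlow k (by omega)
    · rw [show 2 * n - 2 = 2 * n - 3 + 1 by omega, coeff_single_succ_X_mul,
        coeff_X_mul_of_apply_eq_zero (by simp) p, mul_zero, add_zero]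
      exact hlow _ (by omega)
  | 1 =>
    refine ⟨fun k _ => coeff_X_mul_of_apply_eq_zero (by simp) p, ?_, ?_⟩
    · rw [coeff_X_mul_of_apply_eq_zero (by simp) p,
        show Finsupp.single (1 : Fin 2) 2 = Finsupp.single 1 (1 + 1) from rfl,
        coeff_single_succ_X_mul, hbar, mul_zero, add_zero]
    · rw [show Finsupp.single (1 : Fin 2) 1 = Finsupp.single 1 (0 + 1) from rfl,
        coeff_single_succ_X_mul, Finsupp.single_zero, ← Finsupp.single_zero 0]
      exact hlow 0 (by omega)

theorem restrictScalars_orGrassIdeal_le_coordKer {n : ℕ} (hn : 2 ≤ n) :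
    (orGrassIdeal n).restrictScalars ℚ ≤ coordKer n := by
  refine restrictScalars_span_le_of_forall_X_mul_mem (fun i _ hp => X_mul_mem_coordKer hn i hp) ?_
  simp only [Set.insert_subset_iff, Set.singleton_subset_iff, SetLike.mem_coe,
    mem_coordKer_iff (by omega : 1 ≤ n)]
  refine ⟨?_, ?_, ?_⟩
  · refine ⟨fun k hk => ?_, ?_, ?_⟩ <;> simp only [coeff_X_pow, Finsupp.single_eq_single_iff] <;>
      simp <;> omega
  · have hX0X1 {m : Fin 2 →₀ ℕ} (hm : m 0 = 0 ∨ m 1 = 0) :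
        coeff m (X 0 * X 1 : MvPolynomial (Fin 2) ℚ) = 0 := by
      rcases hm with hm | hm
      · exact coeff_X_mul_of_apply_eq_zero hm _
      · rw [mul_comm]; exact coeff_X_mul_of_apply_eq_zero hm _
    refine ⟨fun k _ => hX0X1 (by simp), ?_, hX0X1 (by simp)⟩
    rw [hX0X1 (by simp), hX0X1 (by simp), mul_zero, add_zero]
  · have hC : (-1 : MvPolynomial (Fin 2) ℚ) ^ (n - 1) = C ((-1) ^ (n - 1)) := by simp
    refine ⟨fun k hk => ?_, ?_, ?_⟩ <;>
      simp only [coeff_sub, hC, coeff_C_mul, coeff_X_pow, Finsupp.single_eq_single_iff]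
    · simp; omega
    · simp
    · simp

section Quotient

variable {n : ℕ}

local notation "π" => Ideal.Quotient.mk (orGrassIdeal n)

theorem mk_X_zero_pow_eq_zero : π (X 0) ^ (2 * n - 1) = 0 := by
  rw [← map_pow, Ideal.Quotient.eq_zero_iff_mem]
  exact Ideal.subset_span (by simp)

theorem mk_X_zero_mul_mk_X_one : π (X 0) * π (X 1) = 0 := by
  rw [← map_mul, Ideal.Quotient.eq_zero_iff_mem]
  exact Ideal.subset_span (by simp)

theorem mk_X_one_sq : π (X 1) ^ 2 = (-1) ^ (n - 1) * π (X 0) ^ (2 * n - 2) := by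
  have h : π (X 1 ^ 2 - (-1) ^ (n - 1) * X 0 ^ (2 * n - 2)) = 0 :=
    Ideal.Quotient.eq_zero_iff_mem.mpr (Ideal.subset_span (by simp))
  simpa [sub_eq_zero] using h

theorem linearIndependent_mk_basisRep (hn : 2 ≤ n) :
    LinearIndependent ℚ fun i => π (basisRep n i) := by
  rw [Fintype.linearIndependent_iff]
  intro g hg j
  have hmem : ∑ i, g i • basisRep n i ∈ coordKer n := by
    apply restrictScalars_orGrassIdeal_le_coordKer hn
    rw [Submodule.restrictScalars_mem, ← Ideal.Quotient.eq_zero_iff_mem,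
      ← Ideal.Quotient.mkₐ_eq_mk ℚ, map_sum]
    simpa using hg
  have hj : coord n j (∑ i, g i • basisRep n i) = 0 := by
    simp only [coordKer, Submodule.mem_iInf, LinearMap.mem_ker] at hmem
    exact hmem j
  simpa [coord_basisRep] using hj

theorem span_mk_basisRep (hn : 2 ≤ n) :
    Submodule.span ℚ (Set.range fun i => π (basisRep n i)) = ⊤ := by
  set S := Submodule.span ℚ (Set.range fun i => π (basisRep n i))
  have e_pow_mem (k : ℕ) (hk : k ≤ 2 * n - 2) : π (X 0) ^ k ∈ S :=
    Submodule.subset_span ⟨⟨k, by omega⟩, by simp [basisRep, show k < 2 * n - 1 by omega]⟩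
  have ebar_mem : π (X 1) ∈ S :=
    Submodule.subset_span ⟨⟨2 * n - 1, by omega⟩, by simp [basisRep]⟩
  refine span_eq_top_of_forall_X_mul_mem (Ideal.Quotient.mkₐ_surjective ℚ _)
    (by simpa using e_pow_mem 0 (by omega)) ?_
  rintro i _ ⟨⟨k, hk2n⟩, rfl⟩
  simp only [Ideal.Quotient.mkₐ_eq_mk, basisRep]
  split_ifs with hk
  · rw [map_pow]
    match i with
    | 0 =>
      rw [← pow_succ']
      rcases Nat.lt_or_ge (k + 1) (2 * n - 1) with hk' | hk'
      · exact e_pow_mem _ (by omega)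
      · rw [show k + 1 = 2 * n - 1 by omega, mk_X_zero_pow_eq_zero]
        exact S.zero_mem
    | 1 =>
      cases k with
      | zero => rwa [pow_zero, mul_one]
      | succ k =>
        rw [pow_succ', ← mul_assoc, mul_comm (π (X 1)), mk_X_zero_mul_mk_X_one, zero_mul]
        exact S.zero_mem
  · match i with
    | 0 => rw [mk_X_zero_mul_mk_X_one]; exact S.zero_mem
    | 1 =>
      rw [← sq, mk_X_one_sq]
      have hx := e_pow_mem _ le_rfl
      rcases neg_one_pow_eq_or (MvPolynomial (Fin 2) ℚ ⧸ orGrassIdeal n) (n - 1) with h | h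
      · rwa [h, one_mul]
      · rw [h, neg_one_mul]
        exact S.neg_mem hx

end Quotient

end OrientedGrassmannian

/-- In `A = ℚ[e,ē]/(e^{2n-1}, e·ē, ē² - (-1)^{n-1} e^{2n-2})` (n ≥ 2), the
elements `1, e, e², …, e^{2n-2}, ē` form a `ℚ`-basis; in particular
`dim_ℚ A = 2n`. -/
theorem stmt4 (n : ℕ) (hn : 2 ≤ n) :
    ∃ b : Module.Basis (Fin (2 * n)) ℚ (MvPolynomial (Fin 2) ℚ ⧸ orGrassIdeal n),
      ∀ i : Fin (2 * n),
        b i = Ideal.Quotient.mk (orGrassIdeal n)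
          (if (i : ℕ) < 2 * n - 1 then X 0 ^ (i : ℕ) else X 1) :=
  ⟨.mk (OrientedGrassmannian.linearIndependent_mk_basisRep hn)
    (OrientedGrassmannian.span_mk_basisRep hn).ge, fun i => Module.Basis.mk_apply _ _ i⟩
end

section
/- In the graded ring ℤ[x₁,…,xₙ]/I, where I is generated by the elementary symmetric polynomials e₁(x), …, eₙ(x), every element of the maximal graded degree strictly above 2·(n(n−1)/2) vanishes when deg xᵢ = 2; equivalently, in the coinvariant algebra ℤ[x₁,…,xₙ]/(e₁,…,eₙ), all homogeneous elements of degree > n(n−1)/2 (in the standard grading deg xᵢ = 1) are zero. -/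
/-!
Modulo the ideal, `∏ⱼ (1 + xⱼ t) = 1`, so the complete homogeneous polynomial
`h_k(x_i, …, x_{n-1})` agrees with `(-1)ᵏ e_k(x_0, …, x_{i-1})` and vanishes for `k > i`.
The polynomial `h_{i+1}(x_i, …, x_{n-1})` is monic with lex-leading monomial `x_i^{i+1}`, so
dividing by these elements leaves a remainder all of whose monomials have `a_i ≤ i`, hence
total degree at most `0 + 1 + ⋯ + (n-1) = n(n-1)/2`. As the ideal is homogeneous, a homogeneous
polynomial of larger degree lies in it.
-/

open MvPolynomial

namespace Multiset

variable {R : Type*} [CommSemiring R]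

theorem esymm_cons_succ (a : R) (s : Multiset R) (k : ℕ) :
    (a ::ₘ s).esymm (k + 1) = s.esymm (k + 1) + a * s.esymm k := by
  simp [esymm, powersetCard_cons, map_map, sum_map_mul_left]

end Multiset

namespace List

variable {R : Type*}

def hsymm [CommSemiring R] : List R → ℕ → R
  | _, 0 => 1
  | [], _ + 1 => 0
  | a :: l, k + 1 => a * hsymm (a :: l) k + hsymm l (k + 1)

section CommSemiring

variable [CommSemiring R]

@[simp] theorem hsymm_zero (l : List R) : l.hsymm 0 = 1 := by rw [hsymm]

@[simp] theorem hsymm_nil_succ (k : ℕ) : ([] : List R).hsymm (k + 1) = 0 := by rw [hsymm]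

theorem hsymm_cons_succ (a : R) (l : List R) (k : ℕ) :
    (a :: l).hsymm (k + 1) = a * (a :: l).hsymm k + l.hsymm (k + 1) := by rw [hsymm]

theorem hsymm_mem {S : Type*} [SetLike S R] [SubsemiringClass S R] {s : S} {l : List R}
    (hl : ∀ x ∈ l, x ∈ s) (k : ℕ) : l.hsymm k ∈ s := by
  induction l, k using hsymm.induct with
  | case1 => simp [one_mem s]
  | case2 => simp [zero_mem s]
  | case3 a l k ih ih' =>
    rw [hsymm_cons_succ]
    exact add_mem (mul_mem (hl a mem_cons_self) (ih hl))
      (ih' fun x hx => hl x (mem_cons_of_mem a hx))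

end CommSemiring

-- Modulo `I`, `∏_{x ∈ u ++ v} (1 - x t) = 1`, so
-- `∑ₖ hₖ(v) tᵏ = ∏_{x ∈ v} (1 - x t)⁻¹ = ∏_{x ∈ u} (1 - x t)`.
theorem mk_hsymm_eq_neg_one_pow_mul_mk_esymm [CommRing R] (I : Ideal R) (u v : List R)
    (h : ∀ k, 0 < k → Multiset.esymm ↑(u ++ v) k ∈ I) (k : ℕ) :
    Ideal.Quotient.mk I (v.hsymm k) = (-1) ^ k * Ideal.Quotient.mk I (Multiset.esymm u k) := by
  induction v generalizing u k with
  | nil =>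
    cases k with
    | zero => simp [Multiset.esymm]
    | succ k =>
      rw [hsymm_nil_succ, map_zero,
        Ideal.Quotient.eq_zero_iff_mem.2 (by simpa using h (k + 1) k.succ_pos), mul_zero]
  | cons a v ih =>
    have ih' := ih (u ++ [a]) (by simpa using h)
    have hu : ((u ++ [a] : List R) : Multiset R) = a ::ₘ u := by simp
    induction k with
    | zero => simp [Multiset.esymm]
    | succ k ihk =>
      rw [hsymm_cons_succ, map_add, map_mul, ihk, ih', hu, Multiset.esymm_cons_succ, map_add,
        map_mul]
      ring

end List

namespace MonomialOrder

variable {σ : Type*} [LinearOrder σ] [WellFoundedGT σ]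

theorem lex_lt_single {a : σ} {c : σ →₀ ℕ} (hc : ∀ j ≤ a, c j = 0) {k : ℕ} (hk : 0 < k) :
    c ≺[lex] Finsupp.single a k := by
  refine lex_lt_iff.2 (Finsupp.Lex.lt_iff.2 ⟨a, fun j hj => ?_, ?_⟩)
  · simp [hc j hj.le, Finsupp.single_eq_of_ne hj.ne]
  · simpa [hc a le_rfl] using hk

end MonomialOrder

namespace MvPolynomial

open MonomialOrder

section

variable {σ R : Type*} [CommSemiring R]

theorem apply_eq_zero_of_mem_support_of_mem_supported {p : MvPolynomial σ R} {s : Set σ}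
    (hp : p ∈ supported R s) {c : σ →₀ ℕ} (hc : c ∈ p.support) {j : σ} (hj : j ∉ s) :
    c j = 0 := by
  by_contra hcj
  exact hj (mem_supported.1 hp
    ((mem_vars_iff_mem_support j).2 ⟨c, hc, Finsupp.mem_support_iff.2 hcj⟩))

theorem lex_degree_hsymm_map_X_cons_and_monic [LinearOrder σ] [WellFoundedGT σ] [Nontrivial R]
    {a : σ} {w : List σ} (hw : ∀ j ∈ w, a < j) (k : ℕ) :
    lex.degree (((a :: w).map (X : σ → MvPolynomial σ R)).hsymm k) = Finsupp.single a k ∧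
      lex.Monic (((a :: w).map (X : σ → MvPolynomial σ R)).hsymm k) := by
  induction k with
  | zero => simp [monic_one]
  | succ k ih =>
    set H := ((a :: w).map (X : σ → MvPolynomial σ R)).hsymm
    set T := (w.map (X : σ → MvPolynomial σ R)).hsymm
    have hlead : lex.degree (X a * H k) = Finsupp.single a (k + 1) := by
      rw [degree_mul_of_mul_leadingCoeff_ne_zero (by simp [ih.2.leadingCoeff_eq_one]), degree_X,
        ih.1, ← Finsupp.single_add, add_comm]
    have htail : T (k + 1) ∈ supported R {j | a < j} :=
      List.hsymm_mem (fun x hx => by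
        obtain ⟨j, hj, rfl⟩ := List.mem_map.1 hx
        exact X_mem_supported.2 (hw j hj)) _
    have hlt : lex.degree (T (k + 1)) ≺[lex] lex.degree (X a * H k) := by
      rw [hlead, degree_lt_iff (lex_lt_single (by simp) k.succ_pos)]
      exact fun c hc => lex_lt_single (fun j hj =>
        apply_eq_zero_of_mem_support_of_mem_supported htail hc hj.not_gt) k.succ_pos
    have hH : H (k + 1) = X a * H k + T (k + 1) := List.hsymm_cons_succ _ _ _
    rw [hH, degree_add_of_lt hlt, hlead]
    exact ⟨rfl, (monic_X.mul ih.2).add_of_lt hlt⟩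

end

theorem isHomogeneous_esymm {σ R : Type*} [CommSemiring R] [Fintype σ] (k : ℕ) :
    (esymm σ R k).IsHomogeneous k := by
  refine IsHomogeneous.sum _ _ _ fun t ht => ?_
  have := IsHomogeneous.prod t (fun i => (X i : MvPolynomial σ R)) (fun _ => 1)
    fun i _ => isHomogeneous_X R i
  simpa [(Finset.mem_powersetCard.1 ht).2] using this

section Coinvariant

variable (n : ℕ) (R : Type*) [CommRing R]

noncomputable abbrev coinvariantIdeal : Ideal (MvPolynomial (Fin n) R) :=
  Ideal.span (Set.range fun j : Fin n => esymm (Fin n) R ((j : ℕ) + 1))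

variable {n R}

attribute [local instance] gradedAlgebra

theorem esymm_mem_coinvariantIdeal {k : ℕ} (hk : 0 < k) :
    esymm (Fin n) R k ∈ coinvariantIdeal n R := by
  rcases le_or_gt k n with hkn | hkn
  · exact Ideal.subset_span ⟨⟨k - 1, by omega⟩, by simp only [Nat.sub_add_cancel hk]⟩
  · rw [esymm, Finset.powersetCard_eq_empty.2 (by rwa [Finset.card_univ, Fintype.card_fin]),
      Finset.sum_empty]
    exact zero_mem _

theorem coinvariantIdeal_isHomogeneous :
    (coinvariantIdeal n R).IsHomogeneous (homogeneousSubmodule (Fin n) R) :=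
  Ideal.homogeneous_span _ _ <| by
    rintro _ ⟨j, rfl⟩
    exact ⟨_, isHomogeneous_esymm _⟩

noncomputable def tailHsymm (i k : ℕ) : MvPolynomial (Fin n) R :=
  (((List.finRange n).drop i).map X).hsymm k

theorem tailHsymm_mem_coinvariantIdeal {i k : ℕ} (hik : i < k) :
    tailHsymm i k ∈ coinvariantIdeal n R := by
  set x : Fin n → MvPolynomial (Fin n) R := X
  set u := ((List.finRange n).take i).map x
  have hall : (↑(u ++ ((List.finRange n).drop i).map x) : Multiset _) =
      Finset.univ.val.map x := by
    rw [← List.map_append, List.take_append_drop, Fin.univ_val_map, List.ofFn_eq_map]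
  have hu : Multiset.esymm (u : Multiset (MvPolynomial (Fin n) R)) k = 0 := by
    rw [Multiset.esymm, Multiset.powersetCard_eq_empty]
    · simp
    · simp [u]; omega
  rw [tailHsymm, ← Ideal.Quotient.eq_zero_iff_mem,
    List.mk_hsymm_eq_neg_one_pow_mul_mk_esymm _ u, hu, map_zero, mul_zero]
  intro j hj
  rw [hall, ← esymm_eq_multiset_esymm]
  exact esymm_mem_coinvariantIdeal hj

theorem lex_degree_tailHsymm_and_monic [Nontrivial R] (i : Fin n) (k : ℕ) :
    lex.degree (tailHsymm i k : MvPolynomial (Fin n) R) = Finsupp.single i k ∧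
      lex.Monic (tailHsymm i k : MvPolynomial (Fin n) R) := by
  have hdrop : (List.finRange n).drop i = i :: (List.finRange n).drop (i + 1) := by
    rw [List.drop_eq_getElem_cons (by simp), List.getElem_finRange]
    rfl
  have hsorted := (List.pairwise_lt_finRange n).drop (i := i)
  rw [hdrop, List.pairwise_cons] at hsorted
  rw [tailHsymm, hdrop]
  exact lex_degree_hsymm_map_X_cons_and_monic hsorted.1 k

theorem degree_le_of_forall_not_single_le {c : Fin n →₀ ℕ}
    (hc : ∀ i : Fin n, ¬ Finsupp.single i ((i : ℕ) + 1) ≤ c) : c.degree ≤ n * (n - 1) / 2 := by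
  rw [Finsupp.degree_eq_sum, ← Finset.sum_range_id, ← Fin.sum_univ_eq_sum_range]
  refine Finset.sum_le_sum fun i _ => ?_
  have := hc i
  rw [Finsupp.single_le_iff] at this
  omega

theorem mem_coinvariantIdeal_of_isHomogeneous {p : MvPolynomial (Fin n) R} {d : ℕ}
    (hp : p.IsHomogeneous d) (hd : n * (n - 1) / 2 < d) : p ∈ coinvariantIdeal n R := by
  nontriviality R
  obtain ⟨q, r, hpqr, -, hr⟩ := lex.div (b := fun i : Fin n => tailHsymm i (i + 1)) (fun i => by
    rw [(lex_degree_tailHsymm_and_monic i _).2.leadingCoeff_eq_one]; exact isUnit_one) p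
  have hq : Finsupp.linearCombination _ (fun i : Fin n => tailHsymm i (i + 1)) q ∈
      coinvariantIdeal n R :=
    Submodule.finsuppSum_mem _ _ _ _ fun i _ =>
      Ideal.mul_mem_left _ _ (tailHsymm_mem_coinvariantIdeal (Nat.lt_succ_self i))
  have hr : homogeneousComponent d r = 0 := homogeneousComponent_eq_zero' _ _ fun c hc => by
    have := degree_le_of_forall_not_single_le fun i => by
      rw [← (lex_degree_tailHsymm_and_monic (R := R) i _).1]; exact hr c hc i
    omega
  have hqd := (coinvariantIdeal_isHomogeneous.mem_iff _).1 hq d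
  rw [← DirectSum.Decomposition.decompose'_eq, decomposition.decompose'_apply] at hqd
  rw [← homogeneousComponent_eq_self hp, hpqr, map_add, hr, add_zero]
  exact hqd

end Coinvariant

end MvPolynomial

/-- In the coinvariant algebra `ℤ[x₁,…,xₙ]/(e₁,…,eₙ)` (the cohomology of the
complete complex flag manifold `Fl(ℂⁿ)`), every homogeneous element of degree
`> n(n-1)/2` (standard grading `deg xᵢ = 1`) vanishes. -/
theorem stmt10 (n : ℕ) (p : MvPolynomial (Fin n) ℤ) (d : ℕ)
    (hp : p.IsHomogeneous d) (hd : n * (n - 1) / 2 < d) :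
    Ideal.Quotient.mk
      (Ideal.span (Set.range fun j : Fin n => esymm (Fin n) ℤ ((j : ℕ) + 1))) p
      = 0 :=
  Ideal.Quotient.eq_zero_iff_mem.2 (mem_coinvariantIdeal_of_isHomogeneous hp hd)
end

section
/- For n ≥ 1 and 0 ≤ k ≤ n, let G(n,k)(q) = ∏_{i=1}^{n}(1−q^i)/(∏_{i=1}^{k}(1−q^i)∏_{i=1}^{n−k}(1−q^i)) be the Gaussian binomial; then the product (1+t^{2n+1})·G(n,k)(t⁴) is a polynomial in t with nonnegative coefficients that is palindromic of degree 4k(n−k) + 2n + 1. -/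
open Polynomial Finset

/-- `qFactor m = ∏_{i=1}^{m} (1 - q^i)` in `ℤ[q]`. -/
noncomputable def qFactor (m : ℕ) : Polynomial ℤ :=
  ∏ i ∈ range m, (1 - X ^ (i + 1))

lemma qFactor_succ (m : ℕ) : qFactor (m + 1) = qFactor m * (1 - X ^ (m + 1)) := by
  simp [qFactor, prod_range_succ]

lemma qFactor_zero : qFactor 0 = 1 := by simp [qFactor]

lemma qFactor_ne_zero (m : ℕ) : qFactor m ≠ 0 := by
  induction m with
  | zero => simp [qFactor_zero]
  | succ m ih =>
    rw [qFactor_succ]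
    refine mul_ne_zero ih ?_
    intro h
    have h0 : ((1 : Polynomial ℤ) - X ^ (m + 1)).coeff 0 = 0 := by rw [h]; simp
    simp [coeff_sub, coeff_one, coeff_X_pow] at h0

/-- Gaussian binomial polynomials. -/
noncomputable def gb : ℕ → ℕ → Polynomial ℤ
  | _, 0 => 1
  | 0, _ + 1 => 0
  | n + 1, k + 1 => gb n (k + 1) + X ^ (n - k) * gb n k

lemma gb_zero_right (n : ℕ) : gb n 0 = 1 := by cases n <;> rfl

lemma gb_zero_succ (k : ℕ) : gb 0 (k + 1) = 0 := rfl

lemma gb_succ_succ (n k : ℕ) :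
    gb (n + 1) (k + 1) = gb n (k + 1) + X ^ (n - k) * gb n k := rfl

lemma gb_eq_zero : ∀ n k : ℕ, n < k → gb n k = 0
  | 0, _ + 1, _ => rfl
  | n + 1, k + 1, h => by
    rw [gb_succ_succ, gb_eq_zero n (k + 1) (by omega), gb_eq_zero n k (by omega)]
    simp

lemma gb_self (n : ℕ) : gb n n = 1 := by
  induction n with
  | zero => rfl
  | succ n ih =>
    rw [gb_succ_succ, gb_eq_zero n (n + 1) (by omega), ih]
    simp

lemma gb_spec : ∀ n k : ℕ, k ≤ n → qFactor k * qFactor (n - k) * gb n k = qFactor n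
  | n, 0, _ => by simp [gb_zero_right, qFactor_zero]
  | 0, k + 1, h => by omega
  | n + 1, k + 1, h => by
    rcases Nat.lt_or_ge k n with hkn | hkn
    · obtain ⟨m, rfl⟩ : ∃ m, n = k + m + 1 := ⟨n - k - 1, by omega⟩
      have h1 := gb_spec (k + m + 1) (k + 1) (by omega)
      have h2 := gb_spec (k + m + 1) k (by omega)
      have e1 : k + m + 1 - (k + 1) = m := by omega
      have e2 : k + m + 1 - k = m + 1 := by omega
      have e3 : k + m + 1 + 1 - (k + 1) = m + 1 := by omega
      rw [e1] at h1
      rw [e2] at h2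
      rw [e3, gb_succ_succ, e2, qFactor_succ (k + m + 1), qFactor_succ k,
        qFactor_succ m]
      rw [qFactor_succ k] at h1
      rw [qFactor_succ m] at h2
      have hx : (X : Polynomial ℤ) ^ (k + m + 1 + 1) = X ^ (k + 1) * X ^ (m + 1) := by
        rw [← pow_add]; ring_nf
      rw [hx]
      linear_combination (1 - X ^ (m + 1) : Polynomial ℤ) * h1 +
        (X ^ (m + 1) * (1 - X ^ (k + 1)) : Polynomial ℤ) * h2
    · have hk : k = n := by omega
      subst hk
      simp [gb_succ_succ, gb_eq_zero _ _ (Nat.lt_succ_self _), gb_self, qFactor_zero,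
        Nat.sub_self]

lemma gb_recB (n k : ℕ) (h : k ≤ n) :
    gb (n + 1) (k + 1) = X ^ (k + 1) * gb n (k + 1) + gb n k := by
  rcases Nat.lt_or_ge k n with hkn | hkn
  · obtain ⟨m, rfl⟩ : ∃ m, n = k + m + 1 := ⟨n - k - 1, by omega⟩
    have hne : qFactor (k + 1) * qFactor (m + 1) ≠ 0 :=
      mul_ne_zero (qFactor_ne_zero _) (qFactor_ne_zero _)
    apply mul_left_cancel₀ hne
    have hA := gb_spec (k + m + 1 + 1) (k + 1) (by omega)
    have e3 : k + m + 1 + 1 - (k + 1) = m + 1 := by omega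
    rw [e3] at hA
    rw [hA]
    have h1 := gb_spec (k + m + 1) (k + 1) (by omega)
    have h2 := gb_spec (k + m + 1) k (by omega)
    have e1 : k + m + 1 - (k + 1) = m := by omega
    have e2 : k + m + 1 - k = m + 1 := by omega
    rw [e1] at h1
    rw [e2] at h2
    rw [qFactor_succ k] at h1
    rw [qFactor_succ m] at h2
    rw [qFactor_succ (k + m + 1), qFactor_succ k, qFactor_succ m]
    have hx : (X : Polynomial ℤ) ^ (k + m + 1 + 1) = X ^ (k + 1) * X ^ (m + 1) := by
      rw [← pow_add]; ring_nf
    rw [hx]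
    linear_combination (-(X ^ (k + 1)) * (1 - X ^ (m + 1)) : Polynomial ℤ) * h1 -
      ((1 - X ^ (k + 1)) : Polynomial ℤ) * h2
  · have hk : k = n := by omega
    subst hk
    simp [gb_succ_succ, gb_eq_zero _ _ (Nat.lt_succ_self _), gb_self]

lemma gb_coeff_nonneg : ∀ n k i : ℕ, 0 ≤ (gb n k).coeff i
  | n, 0, i => by
    rw [gb_zero_right, coeff_one]
    split <;> norm_num
  | 0, k + 1, i => by simp [gb_zero_succ]
  | n + 1, k + 1, i => by
    rw [gb_succ_succ, coeff_add, X_pow_mul, coeff_mul_X_pow']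
    have h1 := gb_coeff_nonneg n (k + 1) i
    have h2 := gb_coeff_nonneg n k (i - (n - k))
    split <;> simp_all <;> positivity

lemma gb_natDegree_le : ∀ n k : ℕ, (gb n k).natDegree ≤ k * (n - k)
  | n, 0 => by simp [gb_zero_right]
  | 0, k + 1 => by simp [gb_zero_succ]
  | n + 1, k + 1 => by
    rw [gb_succ_succ]
    refine le_trans (natDegree_add_le _ _) (max_le ?_ ?_)
    · refine le_trans (gb_natDegree_le n (k + 1)) ?_
      have e : n + 1 - (k + 1) = n - k := by omega
      rw [e]
      exact Nat.mul_le_mul_left _ (by omega)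
    · refine le_trans natDegree_mul_le ?_
      rw [natDegree_X_pow]
      have h2 := gb_natDegree_le n k
      have e : n + 1 - (k + 1) = n - k := by omega
      rw [e]
      have e2 : (k + 1) * (n - k) = k * (n - k) + (n - k) := by ring
      omega

lemma gb_coeff_top : ∀ n k : ℕ, k ≤ n → (gb n k).coeff (k * (n - k)) = 1
  | n, 0, _ => by simp [gb_zero_right]
  | 0, k + 1, h => by omega
  | n + 1, k + 1, h => by
    rcases Nat.lt_or_ge k n with hkn | hkn
    · have e : n + 1 - (k + 1) = n - k := by omega
      rw [gb_succ_succ, e, coeff_add]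
      have hs1 : 1 ≤ n - k := by omega
      have emul : (k + 1) * (n - k) = k * (n - k) + (n - k) := by ring
      have hz : (gb n (k + 1)).coeff ((k + 1) * (n - k)) = 0 := by
        apply coeff_eq_zero_of_natDegree_lt
        refine lt_of_le_of_lt (gb_natDegree_le n (k + 1)) ?_
        have h1 : (k + 1) * (n - (k + 1)) + (k + 1) = (k + 1) * (n - (k + 1) + 1) := by
          ring
        have h2 : (k + 1) * (n - (k + 1) + 1) ≤ (k + 1) * (n - k) :=
          Nat.mul_le_mul_left _ (by omega)
        omega
      rw [hz, zero_add, X_pow_mul, coeff_mul_X_pow',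
        if_pos (by omega : n - k ≤ (k + 1) * (n - k))]
      have e4 : (k + 1) * (n - k) - (n - k) = k * (n - k) := by omega
      rw [e4]
      exact gb_coeff_top n k (by omega)
    · have hk : k = n := by omega
      subst hk
      simp [gb_succ_succ, gb_eq_zero _ _ (Nat.lt_succ_self _), gb_self, Nat.sub_self,
        coeff_one]

lemma reflect_shift (m N : ℕ) (p : Polynomial ℤ) (h : p.natDegree ≤ N) :
    reflect (m + N) p = X ^ m * reflect N p := by
  have := reflect_mul (1 : Polynomial ℤ) p (by simp : (1 : Polynomial ℤ).natDegree ≤ m) h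
  simpa [reflect_one] using this

lemma gb_reflect : ∀ n k : ℕ, k ≤ n → reflect (k * (n - k)) (gb n k) = gb n k
  | n, 0, _ => by simp [gb_zero_right, reflect_one]
  | 0, k + 1, h => by omega
  | n + 1, k + 1, h => by
    rcases Nat.lt_or_ge k n with hkn | hkn
    · obtain ⟨m, rfl⟩ : ∃ m, n = k + m + 1 := ⟨n - k - 1, by omega⟩
      have e : k + m + 1 + 1 - (k + 1) = m + 1 := by omega
      have e2 : k + m + 1 - k = m + 1 := by omega
      have e3 : k + m + 1 - (k + 1) = m := by omega
      rw [e, gb_succ_succ, e2, reflect_add]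
      have IH1 := gb_reflect (k + m + 1) (k + 1) (by omega)
      rw [e3] at IH1
      have IH2 := gb_reflect (k + m + 1) k (by omega)
      rw [e2] at IH2
      have hd1 : (gb (k + m + 1) (k + 1)).natDegree ≤ (k + 1) * m := by
        have hh := gb_natDegree_le (k + m + 1) (k + 1)
        rw [e3] at hh
        exact hh
      have hd2 : (gb (k + m + 1) k).natDegree ≤ k * (m + 1) := by
        have hh := gb_natDegree_le (k + m + 1) k
        rw [e2] at hh
        exact hh
      have ha : reflect ((k + 1) * (m + 1)) (gb (k + m + 1) (k + 1)) =
          X ^ (k + 1) * gb (k + m + 1) (k + 1) := by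
        rw [show (k + 1) * (m + 1) = (k + 1) + (k + 1) * m from by ring,
          reflect_shift _ _ _ hd1, IH1]
      have hb : reflect ((k + 1) * (m + 1)) (X ^ (m + 1) * gb (k + m + 1) k) =
          gb (k + m + 1) k := by
        rw [show (k + 1) * (m + 1) = (m + 1) + k * (m + 1) from by ring,
          reflect_mul _ _ (le_of_eq (natDegree_X_pow _)) hd2, reflect_monomial,
          revAt_le (le_refl (m + 1)), Nat.sub_self, pow_zero, one_mul, IH2]
      rw [ha, hb]
      exact (gb_recB (k + m + 1) k (by omega)).symm.trans (by rw [gb_succ_succ, e2])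
    · have hk : k = n := by omega
      subst hk
      simp [Nat.sub_self, gb_succ_succ, gb_eq_zero _ _ (Nat.lt_succ_self _), gb_self,
        reflect_one]

/-- If `G` is the Gaussian binomial polynomial `G(n,k)` (characterized by
`∏_{i=1}^{n}(1-q^i) = ∏_{i=1}^{k}(1-q^i) · ∏_{i=1}^{n-k}(1-q^i) · G`), then
`(1+t^{2n+1})·G(t⁴)` — the Poincaré polynomial of `G_{2k+1}(ℝ^{2n+2})`,
equal to `(1+t^{2n+1})` times the Poincaré polynomial of `G_{2k}(ℝ^{2n})` —
has nonnegative coefficients and is palindromic of degree `4k(n-k)+2n+1`. -/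
theorem stmt12 (n k : ℕ) (hn : 1 ≤ n) (hk : k ≤ n) (G : Polynomial ℤ)
    (hG : qFactor n = qFactor k * qFactor (n - k) * G) :
    (∀ i, 0 ≤ ((1 + X ^ (2 * n + 1)) * G.comp (X ^ 4)).coeff i) ∧
    ((1 + X ^ (2 * n + 1)) * G.comp (X ^ 4)).natDegree =
      4 * k * (n - k) + 2 * n + 1 ∧
    ∀ j ≤ 4 * k * (n - k) + 2 * n + 1,
      ((1 + X ^ (2 * n + 1)) * G.comp (X ^ 4)).coeff j =
        ((1 + X ^ (2 * n + 1)) * G.comp (X ^ 4)).coeff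
          (4 * k * (n - k) + 2 * n + 1 - j) := by
  have hne : qFactor k * qFactor (n - k) ≠ 0 :=
    mul_ne_zero (qFactor_ne_zero _) (qFactor_ne_zero _)
  have hGgb : G = gb n k := by
    apply mul_left_cancel₀ hne
    rw [← hG, gb_spec n k hk]
  subst hGgb
  set d := k * (n - k) with hd
  have hcomp : (gb n k).comp (X ^ 4) = expand ℤ 4 (gb n k) :=
    (expand_eq_comp_X_pow 4).symm
  rw [hcomp]
  set Q := expand ℤ 4 (gb n k) with hQ
  have hGdeg : (gb n k).natDegree = d :=
    le_antisymm (gb_natDegree_le n k)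
      (le_natDegree_of_ne_zero (by rw [gb_coeff_top n k hk]; norm_num))
  have hGne : gb n k ≠ 0 := by
    intro h
    have h1 := gb_coeff_top n k hk
    rw [h] at h1; simp at h1
  have hQdeg : Q.natDegree = 4 * d := by
    rw [hQ, natDegree_expand, hGdeg]; ring
  have hQne : Q ≠ 0 := (expand_ne_zero (by norm_num)).mpr hGne
  have hQcoeff : ∀ i, Q.coeff i = if 4 ∣ i then (gb n k).coeff (i / 4) else 0 := by
    intro i; rw [hQ, coeff_expand (by norm_num)]
  have hQnonneg : ∀ i, 0 ≤ Q.coeff i := by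
    intro i; rw [hQcoeff]; split
    · exact gb_coeff_nonneg n k _
    · exact le_refl _
  have h1deg : ((1 : Polynomial ℤ) + X ^ (2 * n + 1)).natDegree = 2 * n + 1 := by
    rw [add_comm, ← C_1, natDegree_X_pow_add_C]
  have h1ne : ((1 : Polynomial ℤ) + X ^ (2 * n + 1)) ≠ 0 := by
    intro h
    have h0 : ((1 : Polynomial ℤ) + X ^ (2 * n + 1)).coeff 0 = 0 := by rw [h]; simp
    simp [coeff_add, coeff_one, coeff_X_pow] at h0
  have hPcoeff : ∀ i, ((1 + X ^ (2 * n + 1)) * Q).coeff i =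
      Q.coeff i + if 2 * n + 1 ≤ i then Q.coeff (i - (2 * n + 1)) else 0 := by
    intro i
    rw [add_mul, one_mul, coeff_add, X_pow_mul, coeff_mul_X_pow']
  refine ⟨?_, ?_, ?_⟩
  · intro i
    rw [hPcoeff]
    have a1 := hQnonneg i
    have a2 := hQnonneg (i - (2 * n + 1))
    split <;> positivity
  · rw [natDegree_mul h1ne hQne, h1deg, hQdeg, hd]; ring
  · have hgbpal : ∀ i ≤ d, (gb n k).coeff i = (gb n k).coeff (d - i) := by
      intro i hi
      conv_lhs => rw [← gb_reflect n k hk]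
      rw [coeff_reflect, revAt_le hi]
    have hQrefl : reflect (4 * d) Q = Q := by
      ext j
      rw [coeff_reflect]
      rcases le_or_gt j (4 * d) with hj | hj
      · rw [revAt_le hj, hQcoeff, hQcoeff]
        by_cases h4 : 4 ∣ j
        · rw [if_pos h4, if_pos (by omega : 4 ∣ 4 * d - j)]
          obtain ⟨a, rfl⟩ := h4
          have ha : a ≤ d := by omega
          have e1 : 4 * a / 4 = a := by omega
          have e2 : (4 * d - 4 * a) / 4 = d - a := by omega
          rw [e1, e2]
          exact (hgbpal a ha).symm
        · rw [if_neg h4, if_neg (by omega : ¬ 4 ∣ 4 * d - j)]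
      · rw [revAt_eq_self_of_lt hj]
    have hPrefl : reflect (2 * n + 1 + 4 * d) ((1 + X ^ (2 * n + 1)) * Q) =
        (1 + X ^ (2 * n + 1)) * Q := by
      rw [reflect_mul _ _ (le_of_eq h1deg) (le_of_eq hQdeg), hQrefl, reflect_add,
        reflect_one, reflect_monomial, revAt_le (le_refl (2 * n + 1)), Nat.sub_self,
        pow_zero]
      ring
    intro j hj
    have hD : 4 * k * (n - k) + 2 * n + 1 = 2 * n + 1 + 4 * d := by rw [hd]; ring
    rw [hD] at hj ⊢
    conv_lhs => rw [← hPrefl]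
    rw [coeff_reflect, revAt_le hj]
end

section
/- Let R be a commutative ring and v₁, …, vₙ ∈ R. In the polynomial ring R[e₁, …, eₙ], let I be the ideal generated by the n elements σⱼ(e₁², …, eₙ²) − vⱼ for j = 1, …, n (where σⱼ denotes the j-th elementary symmetric polynomial). Then R[e₁,…,eₙ]/I is a free R-module of rank 2ⁿ·n!. -/
/-!
Induct on `n`, eliminating `e₀`. Let `σ'ₖ = σₖ(e₁², …, eₙ₋₁²)` and let `cₖ(t)` be the coefficient
of `xᵏ` in `p(x) / (1 + t² x)`, where `p(x) = 1 + ∑ⱼ vⱼ xʲ`. From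
`σⱼ₊₁(e²) = σ'ⱼ₊₁ + e₀² σ'ⱼ` and `cⱼ₊₁ + t² cⱼ = vⱼ₊₁` we get
`σⱼ₊₁(e²) - vⱼ₊₁ = (σ'ⱼ₊₁ - cⱼ₊₁(e₀)) + e₀² (σ'ⱼ - cⱼ(e₀))`, so the ideal is generated by the
`σ'ₖ - cₖ(e₀)`, `1 ≤ k ≤ n`. For `k = n` this is `-cₙ(e₀)`, and `±cₙ` is monic of degree `2n`.
Hence the quotient is the same kind of quotient in `n - 1` variables over `A[t]/(cₙ)`, which is
free of rank `2n` over `A`, and `2n · 2ⁿ⁻¹ (n-1)! = 2ⁿ n!`.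
-/

open MvPolynomial

/-- The ideal of `R[e₁,…,eₙ]` generated by `σⱼ(e₁²,…,eₙ²) - vⱼ`, `j = 1,…,n`. -/
noncomputable def orFlagBundleIdeal (R : Type*) [CommRing R] (n : ℕ)
    (v : Fin n → R) : Ideal (MvPolynomial (Fin n) R) :=
  Ideal.span (Set.range fun j : Fin n =>
    (aeval fun i : Fin n => (X i : MvPolynomial (Fin n) R) ^ 2)
      (esymm (Fin n) R ((j : ℕ) + 1)) - C (v j))

theorem Multiset.esymm_cons_succ_s16 {R : Type*} [CommSemiring R] (a : R) (s : Multiset R) (k : ℕ) :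
    (a ::ₘ s).esymm (k + 1) = s.esymm (k + 1) + a * s.esymm k := by
  simp only [Multiset.esymm, Multiset.powersetCard_cons, Multiset.map_add, Multiset.sum_add,
    Multiset.map_map, Function.comp_def, Multiset.prod_cons, Multiset.sum_map_mul_left]

theorem Multiset.esymm_eq_zero_of_card_lt {R : Type*} [CommSemiring R] {s : Multiset R} {k : ℕ}
    (h : Multiset.card s < k) : s.esymm k = 0 := by
  simp [Multiset.esymm, Multiset.powersetCard_eq_empty k h]

theorem map_multiset_esymm {R S F : Type*} [CommSemiring R] [CommSemiring S] [FunLike F R S]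
    [RingHomClass F R S] (f : F) (s : Multiset R) (k : ℕ) :
    f (s.esymm k) = (s.map f).esymm k := by
  simp [Multiset.esymm, map_multiset_sum, map_multiset_prod, Multiset.powersetCard_map,
    Multiset.map_map]

theorem Ideal.span_range_add_mul_eq {R : Type*} [CommRing R] (a : R) (h : ℕ → R) (h0 : h 0 = 0)
    (N : ℕ) :
    span (Set.range fun j : Fin N => h (j + 1) + a * h j)
      = span (Set.range fun j : Fin N => h (j + 1)) := by
  set G := span (Set.range fun j : Fin N => h (j + 1) + a * h j)
  set H := span (Set.range fun j : Fin N => h (j + 1))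
  apply le_antisymm <;> rw [span_le] <;> rintro _ ⟨⟨j, hj⟩, rfl⟩
  · have hmem : h j ∈ H := by
      cases j with
      | zero => simp [h0]
      | succ k => exact subset_span ⟨⟨k, by omega⟩, rfl⟩
    exact add_mem (subset_span ⟨⟨j, hj⟩, rfl⟩) (mul_mem_left _ _ hmem)
  · induction j with
    | zero =>
      have hG : h 1 + a * h 0 ∈ G := subset_span ⟨⟨0, hj⟩, rfl⟩
      simpa [h0] using hG
    | succ k ih =>
      have hG : h (k + 2) + a * h (k + 1) ∈ G := subset_span ⟨⟨k + 1, hj⟩, rfl⟩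
      simpa using sub_mem hG (mul_mem_left G a (ih (by omega)))

noncomputable def Ideal.quotientSupKerAlgEquivOfSurjective {R A B : Type*} [CommSemiring R]
    [CommRing A] [CommRing B] [Algebra R A] [Algebra R B] {f : A →ₐ[R] B}
    (hf : Function.Surjective f) (J : Ideal A) :
    (A ⧸ J ⊔ RingHom.ker f) ≃ₐ[R] B ⧸ J.map f :=
  have hsurj : Function.Surjective ((Ideal.Quotient.mkₐ R (J.map f)).comp f) :=
    (Ideal.Quotient.mkₐ_surjective R _).comp hf
  (Ideal.quotientEquivAlgOfEq R (by
    rw [← Ideal.comap_map_of_surjective' f hf J]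
    ext x
    simp [Ideal.Quotient.eq_zero_iff_mem])).trans
    (Ideal.quotientKerAlgEquivOfSurjective hsurj)

namespace MvPolynomial

section Esymm

variable {R S : Type*} [CommSemiring R] [CommSemiring S] [Algebra R S]

theorem aeval_esymm_fin_succ {m : ℕ} (y : Fin (m + 1) → S) (k : ℕ) :
    aeval y (esymm (Fin (m + 1)) R (k + 1))
      = aeval (Fin.tail y) (esymm (Fin m) R (k + 1))
        + y 0 * aeval (Fin.tail y) (esymm (Fin m) R k) := by
  simp only [aeval_esymm_eq_multiset_esymm, Fin.univ_val_map, List.ofFn_succ,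
    ← Multiset.cons_coe, Multiset.esymm_cons_succ_s16]
  rfl

theorem aeval_esymm_of_card_lt {σ : Type*} [Fintype σ] (y : σ → S) {k : ℕ}
    (h : Fintype.card σ < k) : aeval y (esymm σ R k) = 0 := by
  rw [aeval_esymm_eq_multiset_esymm]
  exact Multiset.esymm_eq_zero_of_card_lt (by simpa using h)

end Esymm

theorem map_aeval_sq_esymm {σ R S : Type*} [Fintype σ] [CommRing R] [CommRing S] (f : R →+* S)
    (k : ℕ) :
    map f (aeval (fun i : σ => (X i : MvPolynomial σ R) ^ 2) (esymm σ R k))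
      = aeval (fun i : σ => (X i : MvPolynomial σ S) ^ 2) (esymm σ S k) := by
  simp only [aeval_esymm_eq_multiset_esymm, map_multiset_esymm, Multiset.map_map,
    Function.comp_def, map_pow, map_X]

section FinSuccEquivRight

variable (A : Type*) [CommRing A] (m : ℕ)

noncomputable def finSuccEquivRight :
    MvPolynomial (Fin (m + 1)) A ≃ₐ[A] MvPolynomial (Fin m) (Polynomial A) :=
  (renameEquiv A (_root_.finSuccEquiv m)).trans (optionEquivRight A (Fin m))

variable {A m}

theorem finSuccEquivRight_X_zero : finSuccEquivRight A m (X 0) = C Polynomial.X := by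
  simp [finSuccEquivRight]

theorem finSuccEquivRight_X_succ (i : Fin m) : finSuccEquivRight A m (X i.succ) = X i := by
  simp [finSuccEquivRight]

theorem finSuccEquivRight_C (a : A) : finSuccEquivRight A m (C a) = C (Polynomial.C a) :=
  (finSuccEquivRight A m).commutes a

end FinSuccEquivRight

end MvPolynomial

theorem orFlagBundleIdeal_zero (R : Type*) [CommRing R] (v : Fin 0 → R) :
    orFlagBundleIdeal R 0 v = ⊥ := by
  simp [orFlagBundleIdeal]

theorem map_orFlagBundleIdeal {R S : Type*} [CommRing R] [CommRing S] (f : R →+* S) (n : ℕ)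
    (v : Fin n → R) :
    (orFlagBundleIdeal R n v).map (map f) = orFlagBundleIdeal S n (f ∘ v) := by
  simp only [orFlagBundleIdeal, Ideal.map_span, ← Set.range_comp, Function.comp_def, map_sub,
    map_aeval_sq_esymm, map_C]

/-- `cₖ(t)` is the coefficient of `xᵏ` in `p(x) / (1 + t² x)`, where `p(x) = 1 + ∑ⱼ wⱼ xʲ⁺¹`. -/
noncomputable def cofactorPoly {A : Type*} [CommRing A] {n : ℕ} (w : Fin n → A) :
    ℕ → Polynomial A
  | 0 => 1
  | k + 1 => Polynomial.C (Function.extend Fin.val w 0 k) - Polynomial.X ^ 2 * cofactorPoly w k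

section CofactorPoly

variable {A : Type*} [CommRing A] {n : ℕ} (w : Fin n → A)

theorem cofactorPoly_succ (j : Fin n) :
    cofactorPoly w (j + 1) = Polynomial.C (w j) - Polynomial.X ^ 2 * cofactorPoly w j := by
  rw [cofactorPoly, Fin.val_injective.extend_apply]

theorem monic_and_natDegree_cofactorPoly [Nontrivial A] (k : ℕ) :
    ((-1) ^ k * cofactorPoly w k).Monic ∧ ((-1) ^ k * cofactorPoly w k).natDegree = 2 * k := by
  induction k with
  | zero => simp [cofactorPoly]
  | succ k ih =>
    obtain ⟨hmonic, hdeg⟩ := ih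
    have hrec : (-1) ^ (k + 1) * cofactorPoly w (k + 1)
        = Polynomial.X ^ 2 * ((-1) ^ k * cofactorPoly w k)
          + Polynomial.C (-(-1) ^ k * Function.extend Fin.val w 0 k) := by
      simp only [cofactorPoly, map_mul, map_neg, map_pow, map_one]
      ring
    have hXmonic := (Polynomial.monic_X_pow 2).mul hmonic
    have hXdeg : (Polynomial.X ^ 2 * ((-1) ^ k * cofactorPoly w k)).natDegree = 2 * (k + 1) := by
      rw [(Polynomial.monic_X_pow 2).natDegree_mul hmonic, hdeg, Polynomial.natDegree_X_pow]
      ring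
    rw [hrec, Polynomial.natDegree_add_C, hXdeg]
    refine ⟨hXmonic.add_of_left (Polynomial.degree_C_le.trans_lt ?_), rfl⟩
    rw [Polynomial.degree_eq_natDegree hXmonic.ne_zero, hXdeg]
    exact_mod_cast Nat.succ_pos _

end CofactorPoly

section EliminateFirstVariable

variable {A : Type*} [CommRing A] {m : ℕ} (w : Fin (m + 1) → A)

/-- `cₘ₊₁(e₀) = 0` in the quotient, because `σₘ₊₁` of `m` variables vanishes; the sign makes it
monic. -/
noncomputable def firstVarRelation : Polynomial A :=
  (-1) ^ (m + 1) * cofactorPoly w (m + 1)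

theorem monic_firstVarRelation [Nontrivial A] : (firstVarRelation w).Monic :=
  (monic_and_natDegree_cofactorPoly w _).1

theorem natDegree_firstVarRelation [Nontrivial A] :
    (firstVarRelation w).natDegree = 2 * (m + 1) :=
  (monic_and_natDegree_cofactorPoly w _).2

noncomputable def restRelation (k : ℕ) : MvPolynomial (Fin m) (Polynomial A) :=
  aeval (fun i => (X i : MvPolynomial (Fin m) (Polynomial A)) ^ 2)
      (esymm (Fin m) (Polynomial A) k) - C (cofactorPoly w k)

theorem restRelation_zero : restRelation w 0 = 0 := by
  simp [restRelation, cofactorPoly]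

theorem restRelation_last : restRelation w (m + 1) = -C (cofactorPoly w (m + 1)) := by
  rw [restRelation, aeval_esymm_of_card_lt _ (by simp), zero_sub]

theorem finSuccEquivRight_orFlagGenerator (j : Fin (m + 1)) :
    finSuccEquivRight A m ((aeval fun i => (X i : MvPolynomial (Fin (m + 1)) A) ^ 2)
        (esymm (Fin (m + 1)) A (j + 1)) - C (w j))
      = restRelation w (j + 1) + C (Polynomial.X ^ 2) * restRelation w j := by
  rw [map_sub, ← AlgEquiv.coe_toAlgHom, comp_aeval_apply, aeval_esymm_fin_succ]
  simp only [restRelation, cofactorPoly_succ, Fin.tail_def, AlgEquiv.coe_toAlgHom, map_pow,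
    finSuccEquivRight_X_zero, finSuccEquivRight_X_succ, finSuccEquivRight_C,
    aeval_esymm_eq_multiset_esymm, map_sub, map_mul]
  ring

theorem map_finSuccEquivRight_orFlagBundleIdeal :
    (orFlagBundleIdeal A (m + 1) w).map (finSuccEquivRight A m)
      = orFlagBundleIdeal (Polynomial A) m (fun j => cofactorPoly w (j + 1))
        ⊔ Ideal.span {C (firstVarRelation w)} := by
  rw [orFlagBundleIdeal, Ideal.map_span, ← Set.range_comp]
  simp only [Function.comp_def, finSuccEquivRight_orFlagGenerator]
  rw [Ideal.span_range_add_mul_eq _ _ (restRelation_zero w), ← Fin.snoc_init_self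
    (fun j : Fin (m + 1) => restRelation w (j + 1)), Fin.range_snoc, Ideal.span_insert, sup_comm]
  congr 1
  rw [Fin.val_last, restRelation_last, Ideal.span_singleton_neg, firstVarRelation, map_mul,
    Ideal.span_singleton_mul_left_unit ((isUnit_neg_one.pow _).map C)]

theorem ker_mapAlgHom_mkₐ_firstVarRelation :
    RingHom.ker (mapAlgHom (σ := Fin m) (AdjoinRoot.mkₐ (firstVarRelation w)))
      = Ideal.span {C (firstVarRelation w)} := by
  rw [ker_mapAlgHom, show RingHom.ker (AdjoinRoot.mkₐ (firstVarRelation w)) = _ from Ideal.mk_ker,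
    Ideal.map_span, Set.image_singleton]

theorem map_mapAlgHom_mkₐ_orFlagBundleIdeal :
    (orFlagBundleIdeal (Polynomial A) m fun j => cofactorPoly w (j + 1)).map
        (mapAlgHom (AdjoinRoot.mkₐ (firstVarRelation w)))
      = orFlagBundleIdeal (AdjoinRoot (firstVarRelation w)) m
          (fun j => AdjoinRoot.mk _ (cofactorPoly w (j + 1))) :=
  map_orFlagBundleIdeal (AdjoinRoot.mk _) m _

noncomputable def orFlagQuotientEquivAdjoinRoot :
    (MvPolynomial (Fin (m + 1)) A ⧸ orFlagBundleIdeal A (m + 1) w) ≃ₐ[A]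
      MvPolynomial (Fin m) (AdjoinRoot (firstVarRelation w)) ⧸
        orFlagBundleIdeal (AdjoinRoot (firstVarRelation w)) m
          (fun j => AdjoinRoot.mk _ (cofactorPoly w (j + 1))) :=
  have hsurj : Function.Surjective
      (mapAlgHom (σ := Fin m) (AdjoinRoot.mkₐ (firstVarRelation w))) :=
    map_surjective _ AdjoinRoot.mk_surjective
  (Ideal.quotientEquivAlg _ _ (finSuccEquivRight A m) rfl).trans <|
    (Ideal.quotientEquivAlgOfEq A (by
      rw [Ideal.map_coe, map_finSuccEquivRight_orFlagBundleIdeal,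
        ker_mapAlgHom_mkₐ_firstVarRelation])).trans <|
    (Ideal.quotientSupKerAlgEquivOfSurjective hsurj _).trans <|
    Ideal.quotientEquivAlgOfEq A (map_mapAlgHom_mkₐ_orFlagBundleIdeal w)

end EliminateFirstVariable

theorem Module.Basis.nonempty_fin_mul_of_isScalarTower {R S M : Type*} [CommRing R] [CommRing S]
    [Algebra R S] [AddCommGroup M] [Module R M] [Module S M] [IsScalarTower R S M] {a b : ℕ}
    (bS : Module.Basis (Fin a) R S) (bM : Module.Basis (Fin b) S M) :
    Nonempty (Module.Basis (Fin (a * b)) R M) :=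
  ⟨(bS.smulTower bM).reindex finProdFinEquiv⟩

/-- For any commutative ring `R` and `v₁,…,vₙ ∈ R`, the quotient
`R[e₁,…,eₙ]/(σⱼ(e₁²,…,eₙ²) - vⱼ, j = 1,…,n)` — the cohomology of the
complete even-rank oriented flag bundle `F̃l(V^{2n+1})` with `pⱼ(V) = vⱼ` —
is a free `R`-module of rank `2ⁿ · n!`. -/
theorem stmt16 (R : Type*) [CommRing R] (n : ℕ) (v : Fin n → R) :
    Nonempty (Module.Basis (Fin (2 ^ n * n.factorial)) R
      (MvPolynomial (Fin n) R ⧸ orFlagBundleIdeal R n v)) := by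
  induction n generalizing R with
  | zero =>
    let e := (Ideal.quotientEquivAlgOfEq R (orFlagBundleIdeal_zero R v)).trans
      ((AlgEquiv.quotientBot R _).trans (isEmptyAlgEquiv R (Fin 0)))
    exact ⟨(Module.Basis.singleton (Fin 1) R).map e.symm.toLinearEquiv⟩
  | succ m ih =>
    -- over the zero ring every `natDegree` is `0`, so the degree count below fails there
    rcases subsingleton_or_nontrivial R with hR | hR
    · exact ⟨.ofRepr (LinearEquiv.ofSubsingleton _ _)⟩
    obtain ⟨bRest⟩ := ih (AdjoinRoot (firstVarRelation v))
      (fun j => AdjoinRoot.mk _ (cofactorPoly v (j + 1)))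
    obtain ⟨b⟩ := Module.Basis.nonempty_fin_mul_of_isScalarTower
      (AdjoinRoot.powerBasis' (monic_firstVarRelation v)).basis bRest
    have hcard : (firstVarRelation v).natDegree * (2 ^ m * m.factorial)
        = 2 ^ (m + 1) * (m + 1).factorial := by
      rw [natDegree_firstVarRelation, Nat.factorial_succ, pow_succ]
      ring
    exact ⟨(b.reindex (finCongr hcard)).map (orFlagQuotientEquivAdjoinRoot v).symm.toLinearEquiv⟩
end
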